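/- Suppose Assumptions 1 and 3 hold. A fundamental trend stationary equilibrium of the two-sector large open economy (i.e., one with P_t = D/(R−1) for all t) exists if and only if λ < λ̄. When λ < λ̄, this equilibrium is unique and satisfies: G = 1, where R ∈ (1, 1/β) is the unique solution of β(R + λπ(R)) = 1; B_t = 0 and P_t = D/(R−1) for all t. (Land Bubble Characterization Theorem in trend stationary equilibria, fundamental part.) -/

import Mathlib

open Filter Topology MeasureTheory

/-!
In a fundamental equilibrium the land price is constant, yet it has to remain the fixed positive
share `β (1 - λ (1 - Φ(R/m)))` of wealth `W_t = G^t W_0`; this forces `G = 1` and `B_t = 0`, and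
makes `R` a root of `h(R) = β (R + λ π(R)) = 1`. On `[a, b]` the premium `π` has slope at least
`-(1 - Φ(a/m))`, so `h` is strictly increasing to the right of any point satisfying the leverage
threshold `λ (1 - Φ(R/m)) < 1`; this gives uniqueness of `R`. Assumption 3 makes the threshold
hold at `1` as soon as `h(1) < 1` (which is `λ < λ̄`) or `h` has a root `R > 1`. Hence a root
`R > 1` gives `h(1) < h(R) = 1`, and conversely `h(1) < 1 < h(1/β)` yields a root by the
intermediate value theorem, at which the threshold holds since `Φ` is monotone.
-/

/-- **Assumption 1.** `Φ` (the law `μ` of productivity) is an absolutely continuous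
cdf on `[0,∞)` with `Φ(z) < 1` for all `z` and a finite mean. -/
structure Assumption1 (μ : Measure ℝ) : Prop where
  prob : IsProbabilityMeasure μ
  supp : μ (Set.Iio 0) = 0
  absCont : μ ≪ MeasureTheory.volume
  lt_one : ∀ z : ℝ, μ (Set.Iic z) < 1
  finite_mean : Integrable id μ

/-- The cdf `Φ` of the productivity distribution `μ`. -/
noncomputable def Phi (μ : Measure ℝ) (z : ℝ) : ℝ := (μ (Set.Iic z)).toReal

/-- The risk premium `π(R) = ∫ max{0, mz − R} dΦ(z)` on unlevered capital investment. -/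
noncomputable def premium (μ : Measure ℝ) (m R : ℝ) : ℝ := ∫ z, max 0 (m * z - R) ∂μ

/-- The leverage threshold `λ̄ = ((1−β)/β)·(∫ max{mz−1, 0} dΦ(z))⁻¹`. -/
noncomputable def lamBar (β m : ℝ) (μ : Measure ℝ) : ℝ :=
  ((1 - β) / β) * (∫ z, max (m * z - 1) 0 ∂μ)⁻¹

/-- **Trend stationary equilibrium** of the two-sector large open economy with linear
technology `F(K,X) = mK + DX`: gross risk-free rate `R > 1`, growth rate `G > 0`,
threshold `z̄ = R/m` with `Φ(z̄) > 1 − 1/λ`, and sequences of aggregate wealth,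
capital, land price, and external savings satisfying the equilibrium conditions,
with `B_t/W_t → 0`. -/
structure TSE (μ : Measure ℝ) (β lam m D : ℝ)
    (R G : ℝ) (W K P B : ℕ → ℝ) : Prop where
  hR : 1 < R
  hG : 0 < G
  hthr : 1 - 1 / lam < Phi μ (R / m)
  hW : ∀ t, 0 < W t
  hP : ∀ t, 0 < P t
  price : ∀ t, R = (P (t + 1) + D) / P t
  growth : G = β * (R + lam * premium μ m R)
  Wdyn : ∀ t, W (t + 1) = G * W t
  Kdyn : ∀ t, K (t + 1) = β * lam * W t * ∫ z in Set.Ioi (R / m), z ∂μ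
  bond : ∀ t, P t + B t = β * (lam * Phi μ (R / m) + 1 - lam) * W t
  wealth : ∀ t, W (t + 1) = m * K (t + 1) + R * (P t + B t)
  hBW : Filter.Tendsto (fun t => B t / W t) Filter.atTop (nhds 0)

section Premium

variable {μ : Measure ℝ} {m : ℝ}

lemma integrable_premium_integrand [IsFiniteMeasure μ] (hmean : Integrable id μ) (R : ℝ) :
    Integrable (fun z => max 0 (m * z - R)) μ :=
  (integrable_const 0).sup ((hmean.const_mul m).sub (integrable_const R))

lemma premium_nonneg (R : ℝ) : 0 ≤ premium μ m R :=
  integral_nonneg fun _ => le_max_left _ _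

variable (hm : 0 < m)
include hm

lemma premium_integrand_sub_le_indicator {a b : ℝ} (hab : a ≤ b) (z : ℝ) :
    max 0 (m * z - a) - max 0 (m * z - b) ≤ (Set.Ioi (a / m)).indicator (fun _ => b - a) z := by
  by_cases hz : z ∈ Set.Ioi (a / m)
  · rw [Set.indicator_of_mem hz]
    have := le_max_right 0 (m * z - b)
    have := le_max_left 0 (m * z - b)
    exact sub_le_iff_le_add'.mpr (max_le (by linarith) (by linarith))
  · have : m * z ≤ a := by rwa [Set.mem_Ioi, not_lt, le_div_iff₀' hm] at hz
    rw [Set.indicator_of_notMem hz, max_eq_left (by linarith), max_eq_left (by linarith), sub_self]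

lemma indicator_le_premium_integrand_sub {a b : ℝ} (hab : a ≤ b) (z : ℝ) :
    (Set.Ioi (b / m)).indicator (fun _ => b - a) z ≤ max 0 (m * z - a) - max 0 (m * z - b) := by
  by_cases hz : z ∈ Set.Ioi (b / m)
  · have : b < m * z := by rwa [Set.mem_Ioi, div_lt_iff₀' hm] at hz
    rw [Set.indicator_of_mem hz, max_eq_right (by linarith), max_eq_right (by linarith)]
    linarith
  · rw [Set.indicator_of_notMem hz, sub_nonneg]
    exact max_le_max le_rfl (by linarith)

variable [IsFiniteMeasure μ] (hmean : Integrable id μ)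
include hmean

lemma premium_sub_le {a b : ℝ} (hab : a ≤ b) :
    premium μ m a - premium μ m b ≤ (b - a) * μ.real (Set.Ioi (a / m)) := by
  rw [premium, premium, ← integral_sub (integrable_premium_integrand hmean a)
    (integrable_premium_integrand hmean b), mul_comm, ← smul_eq_mul,
    ← integral_indicator_const _ measurableSet_Ioi]
  exact integral_mono
    ((integrable_premium_integrand hmean a).sub (integrable_premium_integrand hmean b))
    ((integrable_const _).indicator measurableSet_Ioi) (premium_integrand_sub_le_indicator hm hab)

lemma le_premium_sub {a b : ℝ} (hab : a ≤ b) :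
    (b - a) * μ.real (Set.Ioi (b / m)) ≤ premium μ m a - premium μ m b := by
  rw [premium, premium, ← integral_sub (integrable_premium_integrand hmean a)
    (integrable_premium_integrand hmean b), mul_comm, ← smul_eq_mul,
    ← integral_indicator_const _ measurableSet_Ioi]
  exact integral_mono ((integrable_const _).indicator measurableSet_Ioi)
    ((integrable_premium_integrand hmean a).sub (integrable_premium_integrand hmean b))
    (indicator_le_premium_integrand_sub hm hab)

lemma premium_pos (hunb : ∀ x, μ (Set.Ioi x) ≠ 0) (R : ℝ) : 0 < premium μ m R := by
  have hpos : 0 < μ.real (Set.Ioi ((R + 1) / m)) :=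
    ENNReal.toReal_pos (hunb _) (measure_ne_top _ _)
  have := le_premium_sub hm hmean (le_add_of_nonneg_right zero_le_one : R ≤ R + 1)
  have := premium_nonneg (μ := μ) (m := m) (R + 1)
  nlinarith

lemma premium_eq (R : ℝ) :
    premium μ m R = m * (∫ z in Set.Ioi (R / m), z ∂μ) - R * μ.real (Set.Ioi (R / m)) := by
  have hIoi : ∀ z ∈ Set.Ioi (R / m), max 0 (m * z - R) = m * z - R := fun z hz =>
    max_eq_right (by rw [Set.mem_Ioi, div_lt_iff₀' hm] at hz; linarith)
  have hIic : ∀ z ∉ Set.Ioi (R / m), max 0 (m * z - R) = 0 := fun z hz =>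
    max_eq_left (by rw [Set.mem_Ioi, not_lt, le_div_iff₀' hm] at hz; linarith)
  have hlin : IntegrableOn (fun z => m * z) (Set.Ioi (R / m)) μ := hmean.integrableOn.const_mul m
  rw [premium, ← setIntegral_eq_integral_of_forall_compl_eq_zero hIic,
    setIntegral_congr_fun measurableSet_Ioi hIoi,
    integral_sub hlin (integrable_const R), integral_const_mul,
    setIntegral_const, smul_eq_mul, mul_comm R]

lemma lipschitzWith_one_premium [IsProbabilityMeasure μ] : LipschitzWith 1 (premium μ m) := by
  have key : ∀ a b, a ≤ b → dist (premium μ m a) (premium μ m b) ≤ dist a b := by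
    intro a b hab
    have hlow := le_premium_sub hm hmean hab
    have hup := premium_sub_le hm hmean hab
    have : (b - a) * μ.real (Set.Ioi (a / m)) ≤ b - a :=
      mul_le_of_le_one_right (sub_nonneg.mpr hab) measureReal_le_one
    have : 0 ≤ (b - a) * μ.real (Set.Ioi (b / m)) :=
      mul_nonneg (sub_nonneg.mpr hab) measureReal_nonneg
    rw [Real.dist_eq, Real.dist_eq, abs_of_nonneg (by linarith), abs_of_nonpos (by linarith)]
    linarith
  refine LipschitzWith.of_dist_le_mul fun a b => ?_
  rw [NNReal.coe_one, one_mul]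
  rcases le_total a b with hab | hba
  · exact key a b hab
  · rw [dist_comm, dist_comm a]; exact key b a hba

end Premium

lemma Phi_add_measureReal_Ioi {μ : Measure ℝ} [IsProbabilityMeasure μ] (x : ℝ) :
    Phi μ x + μ.real (Set.Ioi x) = 1 := by
  show μ.real (Set.Iic x) + _ = 1
  rw [← Set.compl_Iic, probReal_compl_eq_one_sub measurableSet_Iic, add_sub_cancel]

lemma one_sub_inv_lt_Phi_iff {μ : Measure ℝ} [IsProbabilityMeasure μ] {lam : ℝ} (hlam : 0 < lam)
    (x : ℝ) : 1 - 1 / lam < Phi μ x ↔ lam * μ.real (Set.Ioi x) < 1 := by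
  rw [← lt_div_iff₀' hlam, ← Phi_add_measureReal_Ioi (μ := μ) x]
  constructor <;> intro h <;> linarith

lemma bond_coeff_eq {μ : Measure ℝ} [IsProbabilityMeasure μ] (lam x : ℝ) :
    lam * Phi μ x + 1 - lam = 1 - lam * μ.real (Set.Ioi x) := by
  linear_combination lam * Phi_add_measureReal_Ioi (μ := μ) x

namespace Assumption1

variable {μ : Measure ℝ} (hμ : Assumption1 μ)
include hμ

lemma measure_Ioi_ne_zero (x : ℝ) : μ (Set.Ioi x) ≠ 0 := by
  have := hμ.prob
  have h := measure_add_measure_compl (μ := μ) (measurableSet_Iic (a := x))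
  rw [Set.compl_Iic, measure_univ] at h
  intro h0
  exact (hμ.lt_one x).ne (by rw [← h, h0, add_zero])

lemma premium_pos {m : ℝ} (hm : 0 < m) (R : ℝ) : 0 < premium μ m R :=
  have := hμ.prob
  _root_.premium_pos hm hμ.finite_mean hμ.measure_Ioi_ne_zero R

end Assumption1

lemma lamBar_eq (β m : ℝ) (μ : Measure ℝ) :
    lamBar β m μ = (1 - β) / β * (premium μ m 1)⁻¹ := by
  simp only [lamBar, premium, max_comm (0 : ℝ)]

lemma lt_lamBar_iff {μ : Measure ℝ} {β lam m : ℝ} (hβ : 0 < β) (hπ : 0 < premium μ m 1) :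
    lam < lamBar β m μ ↔ β * (1 + lam * premium μ m 1) < 1 := by
  rw [lamBar_eq, ← div_eq_mul_inv, lt_div_iff₀ hπ, lt_div_iff₀' hβ]
  constructor <;> intro h <;> linarith

section RootFunction

variable {μ : Measure ℝ} [IsProbabilityMeasure μ] {β lam m : ℝ} (hm : 0 < m)
  (hmean : Integrable id μ)
include hm hmean

lemma one_sub_mul_measureReal_Ioi_lt_premium
    (hA3 : 1 - Phi μ (1 / m) < β * m * ∫ z in Set.Ioi (1 / m), z ∂μ) :
    (1 - β) * μ.real (Set.Ioi (1 / m)) < β * premium μ m 1 := by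
  rw [premium_eq hm hmean]
  linarith [Phi_add_measureReal_Ioi (μ := μ) (1 / m)]

lemma growth_lt_growth (hβ : 0 < β) (hlam : 0 ≤ lam) {a b : ℝ} (hab : a < b)
    (hthr : lam * μ.real (Set.Ioi (a / m)) < 1) :
    β * (a + lam * premium μ m a) < β * (b + lam * premium μ m b) := by
  have hslope := premium_sub_le hm hmean hab.le
  have : lam * (premium μ m a - premium μ m b) < b - a := by
    nlinarith [mul_le_mul_of_nonneg_left hslope hlam]
  nlinarith

lemma lam_mul_measureReal_Ioi_lt_one
    (hA3 : (1 - β) * μ.real (Set.Ioi (1 / m)) < β * premium μ m 1) (hβ : 0 < β) (hlam : 0 < lam)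
    {R : ℝ}
    (hR : 1 ≤ R) (hβR : β * R < 1) (hroot : β * (R + lam * premium μ m R) ≤ 1) :
    lam * μ.real (Set.Ioi (1 / m)) < 1 := by
  have hslope := premium_sub_le hm hmean hR
  have : lam * μ.real (Set.Ioi (1 / m)) * (1 - β * R) < 1 - β * R := by
    nlinarith [mul_lt_mul_of_pos_left hA3 hlam,
      mul_le_mul_of_nonneg_left hslope (mul_nonneg hlam.le hβ.le)]
  nlinarith

end RootFunction

section Equilibrium

variable {μ : Measure ℝ} {β lam m : ℝ}

lemma lt_one_div_of_growth_eq_one (hμ : Assumption1 μ) (hm : 0 < m) (hβ : 0 < β) (hlam : 0 < lam)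
    {R : ℝ} (hroot : β * (R + lam * premium μ m R) = 1) : R < 1 / β := by
  rw [lt_div_iff₀' hβ]
  nlinarith [mul_pos hβ (mul_pos hlam (hμ.premium_pos hm R))]

lemma lt_lamBar_of_growth_eq_one (hμ : Assumption1 μ) (hm : 0 < m) (hβ : 0 < β) (hlam : 0 < lam)
    (hA3 : (1 - β) * μ.real (Set.Ioi (1 / m)) < β * premium μ m 1) {R : ℝ} (hR : 1 < R)
    (hroot : β * (R + lam * premium μ m R) = 1) : lam < lamBar β m μ := by
  have := hμ.prob
  have hβR : β * R < 1 := (lt_div_iff₀' hβ).mp (lt_one_div_of_growth_eq_one hμ hm hβ hlam hroot)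
  have hthr := lam_mul_measureReal_Ioi_lt_one hm hμ.finite_mean hA3 hβ hlam hR.le hβR hroot.le
  rw [lt_lamBar_iff hβ (hμ.premium_pos hm 1)]
  exact (growth_lt_growth hm hμ.finite_mean hβ hlam.le hR hthr).trans_eq hroot

lemma exists_growth_eq_one_of_lt_lamBar (hμ : Assumption1 μ) (hm : 0 < m)
    (hβ : β ∈ Set.Ioo (0 : ℝ) 1) (hlam : 0 < lam)
    (hA3 : (1 - β) * μ.real (Set.Ioi (1 / m)) < β * premium μ m 1) (hlt : lam < lamBar β m μ) :
    ∃ R, 1 < R ∧ β * (R + lam * premium μ m R) = 1 ∧ lam * μ.real (Set.Ioi (R / m)) < 1 := by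
  have := hμ.prob
  obtain ⟨hβ0, hβ1⟩ := hβ
  have hlow : β * (1 + lam * premium μ m 1) < 1 := (lt_lamBar_iff hβ0 (hμ.premium_pos hm 1)).mp hlt
  have hthr := lam_mul_measureReal_Ioi_lt_one hm hμ.finite_mean hA3 hβ0 hlam le_rfl
    (by linarith) hlow.le
  have hhigh : 1 < β * (1 / β + lam * premium μ m (1 / β)) := by
    rw [mul_add, mul_one_div_cancel hβ0.ne']
    nlinarith [mul_pos hβ0 (mul_pos hlam (hμ.premium_pos hm (1 / β)))]
  have hcont : Continuous fun R => β * (R + lam * premium μ m R) := by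
    have := (lipschitzWith_one_premium hm hμ.finite_mean).continuous
    fun_prop
  obtain ⟨R, ⟨hR1, -⟩, hroot⟩ := intermediate_value_Ioo (one_le_one_div hβ0 hβ1.le)
    hcont.continuousOn ⟨hlow, hhigh⟩
  refine ⟨R, hR1, hroot, lt_of_le_of_lt ?_ hthr⟩
  gcongr
  exact measure_ne_top _ _

lemma eq_of_growth_eq_one [IsProbabilityMeasure μ] (hm : 0 < m) (hmean : Integrable id μ)
    (hβ : 0 < β) (hlam : 0 ≤ lam) {R R' : ℝ}
    (hroot : β * (R + lam * premium μ m R) = 1) (hthr : lam * μ.real (Set.Ioi (R / m)) < 1)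
    (hroot' : β * (R' + lam * premium μ m R') = 1) (hthr' : lam * μ.real (Set.Ioi (R' / m)) < 1) :
    R = R' :=
  le_antisymm
    (not_lt.mp fun h => (growth_lt_growth hm hmean hβ hlam h hthr').ne (hroot'.trans hroot.symm))
    (not_lt.mp fun h => (growth_lt_growth hm hmean hβ hlam h hthr).ne (hroot.trans hroot'.symm))

lemma tse_of_growth_eq_one [IsProbabilityMeasure μ] (hm : 0 < m) (hmean : Integrable id μ)
    (hβ : 0 < β) (hlam : 0 < lam) {D R : ℝ} (hD : 0 < D) (hR : 1 < R)
    (hroot : β * (R + lam * premium μ m R) = 1) (hthr : lam * μ.real (Set.Ioi (R / m)) < 1) :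
    let W₀ := D / (R - 1) / (β * (lam * Phi μ (R / m) + 1 - lam))
    TSE μ β lam m D R 1 (fun _ => W₀) (fun _ => β * lam * W₀ * ∫ z in Set.Ioi (R / m), z ∂μ)
      (fun _ => D / (R - 1)) (fun _ => 0) := by
  intro W₀
  have hc : 0 < lam * Phi μ (R / m) + 1 - lam := by
    rw [bond_coeff_eq]
    linarith
  have hP : 0 < D / (R - 1) := div_pos hD (by linarith)
  have hW₀ : β * (lam * Phi μ (R / m) + 1 - lam) * W₀ = D / (R - 1) :=
    mul_div_cancel₀ _ (mul_pos hβ hc).ne'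
  have hwealth : 1 = m * (β * lam * ∫ z in Set.Ioi (R / m), z ∂μ)
      + R * (β * (lam * Phi μ (R / m) + 1 - lam)) := by
    rw [premium_eq hm hmean] at hroot
    linear_combination -hroot - R * β * lam * Phi_add_measureReal_Ioi (μ := μ) (R / m)
  refine ⟨hR, one_pos, (one_sub_inv_lt_Phi_iff hlam _).mpr hthr, fun _ => ?_, fun _ => hP,
    fun _ => ?_, hroot.symm, fun _ => (one_mul _).symm, fun _ => rfl, fun _ => ?_, fun _ => ?_,
    ?_⟩
  · exact div_pos hP (mul_pos hβ hc)
  · field_simp [(sub_pos.mpr hR).ne']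
    ring
  · rw [add_zero, hW₀]
  · rw [add_zero, ← hW₀]
    linear_combination W₀ * hwealth
  · simpa only [zero_div] using tendsto_const_nhds

end Equilibrium

lemma eq_one_of_tendsto_of_eq_mul_succ {x : ℕ → ℝ} {L r : ℝ} (hx : Tendsto x atTop (𝓝 L))
    (hL : L ≠ 0) (hrec : ∀ t, x t = r * x (t + 1)) : r = 1 := by
  have h : Tendsto x atTop (𝓝 (r * L)) := by
    simpa only [Function.comp_def, ← hrec] using (hx.comp (tendsto_add_atTop_nat 1)).const_mul r
  exact (mul_eq_right₀ hL).mp (tendsto_nhds_unique h hx)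

namespace TSE

variable {μ : Measure ℝ} {β lam m D R G : ℝ} {W K P B : ℕ → ℝ}

section

variable (h : TSE μ β lam m D R G W K P B)
include h

lemma bond_coeff_pos (hlam : 0 < lam) : 0 < lam * Phi μ (R / m) + 1 - lam := by
  have := mul_lt_mul_of_pos_left h.hthr hlam
  rw [mul_sub, mul_one, mul_one_div_cancel hlam.ne'] at this
  linarith

lemma wealth_eq_pow (t : ℕ) : W t = G ^ t * W 0 := by
  induction t with
  | zero => rw [pow_zero, one_mul]
  | succ t ih => rw [h.Wdyn, ih, pow_succ, mul_comm _ G, mul_assoc]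

lemma tendsto_price_div_wealth :
    Tendsto (fun t => P t / W t) atTop (𝓝 (β * (lam * Phi μ (R / m) + 1 - lam))) := by
  have hPW : ∀ t, P t / W t = β * (lam * Phi μ (R / m) + 1 - lam) - B t / W t := fun t => by
    rw [eq_sub_iff_add_eq, ← add_div, h.bond, mul_div_cancel_right₀ _ (h.hW t).ne']
  simpa only [hPW, sub_zero] using tendsto_const_nhds.sub h.hBW

variable (hβ : 0 < β) (hlam : 0 < lam) {p : ℝ} (hP : ∀ t, P t = p)
include hβ hlam hP

lemma growth_eq_one_of_const_price : G = 1 := by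
  refine eq_one_of_tendsto_of_eq_mul_succ h.tendsto_price_div_wealth
    (mul_pos hβ (h.bond_coeff_pos hlam)).ne' fun t => ?_
  rw [hP, hP, h.Wdyn]
  field_simp [(h.hW t).ne', h.hG.ne']

lemma wealth_eq_of_const_price (t : ℕ) :
    W t = p / (β * (lam * Phi μ (R / m) + 1 - lam)) := by
  have hW : ∀ t, W t = W 0 := fun t => by
    rw [h.wealth_eq_pow, h.growth_eq_one_of_const_price hβ hlam hP, one_pow, one_mul]
  have hlim : p / W 0 = β * (lam * Phi μ (R / m) + 1 - lam) :=
    tendsto_nhds_unique tendsto_const_nhds (by simpa only [hP, hW] using h.tendsto_price_div_wealth)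
  rw [← hlim, hW, div_div_cancel₀ (hP 0 ▸ h.hP 0).ne']

lemma bond_eq_zero_of_const_price (t : ℕ) : B t = 0 := by
  have := h.bond t
  rw [hP, h.wealth_eq_of_const_price hβ hlam hP,
    mul_div_cancel₀ _ (mul_pos hβ (h.bond_coeff_pos hlam)).ne'] at this
  linarith

lemma root_of_const_price : β * (R + lam * premium μ m R) = 1 :=
  h.growth.symm.trans (h.growth_eq_one_of_const_price hβ hlam hP)

end

variable (hμ : Assumption1 μ) (hm : 0 < m) (hβ : 0 < β) (hlam : 0 < lam)
include hμ hm hβ hlam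

lemma fundamental_properties (h : TSE μ β lam m D R G W K P B) (hfund : ∀ t, P t = D / (R - 1)) :
    G = 1 ∧ β * (R + lam * premium μ m R) = 1 ∧ 1 < R ∧ R < 1 / β ∧ ∀ t, B t = 0 :=
  have hroot := h.root_of_const_price hβ hlam hfund
  ⟨h.growth_eq_one_of_const_price hβ hlam hfund, hroot, h.hR,
    lt_one_div_of_growth_eq_one hμ hm hβ hlam hroot, h.bond_eq_zero_of_const_price hβ hlam hfund⟩

lemma eq_of_fundamental {R' G' : ℝ} {W' K' P' B' : ℕ → ℝ}
    (h : TSE μ β lam m D R G W K P B) (hfund : ∀ t, P t = D / (R - 1))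
    (h' : TSE μ β lam m D R' G' W' K' P' B') (hfund' : ∀ t, P' t = D / (R' - 1)) :
    R = R' ∧ G = G' ∧ W = W' ∧ P = P' ∧ B = B' ∧ ∀ t, K (t + 1) = K' (t + 1) := by
  have := hμ.prob
  obtain rfl : R = R' := eq_of_growth_eq_one hm hμ.finite_mean hβ hlam.le
    (h.root_of_const_price hβ hlam hfund) ((one_sub_inv_lt_Phi_iff hlam _).mp h.hthr)
    (h'.root_of_const_price hβ hlam hfund') ((one_sub_inv_lt_Phi_iff hlam _).mp h'.hthr)
  have hW : W = W' := funext fun t => by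
    rw [h.wealth_eq_of_const_price hβ hlam hfund, h'.wealth_eq_of_const_price hβ hlam hfund']
  refine ⟨rfl, ?_, hW, funext fun t => (hfund t).trans (hfund' t).symm, funext fun t => ?_,
    fun t => by rw [h.Kdyn, h'.Kdyn, hW]⟩
  · rw [h.growth_eq_one_of_const_price hβ hlam hfund,
      h'.growth_eq_one_of_const_price hβ hlam hfund']
  · rw [h.bond_eq_zero_of_const_price hβ hlam hfund,
      h'.bond_eq_zero_of_const_price hβ hlam hfund']

end TSE

/-- **Land Bubble Characterization in trend stationary equilibria, fundamental part.**
Under Assumptions 1 and 3, a fundamental trend stationary equilibrium (one with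
`P_t = D/(R−1)` for all `t`) exists if and only if `λ < λ̄`; any such equilibrium has
`G = 1`, interest rate `R ∈ (1, 1/β)` solving `β(R + λπ(R)) = 1`, and `B_t = 0`;
and the equilibrium is unique (up to the free initial capital `K₀`). -/
theorem tse_fundamental_characterization
    (μ : Measure ℝ) (hμ : Assumption1 μ)
    (β lam m D : ℝ) (hβ : β ∈ Set.Ioo (0 : ℝ) 1) (hlam : 1 ≤ lam)
    (hm : 0 < m) (hD : 0 < D)
    (hA3 : 1 - Phi μ (1 / m) < β * m * ∫ z in Set.Ioi (1 / m), z ∂μ) :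
    ((∃ (R G : ℝ) (W K P B : ℕ → ℝ),
        TSE μ β lam m D R G W K P B ∧ ∀ t, P t = D / (R - 1)) ↔
      lam < lamBar β m μ) ∧
    (∀ (R G : ℝ) (W K P B : ℕ → ℝ),
      TSE μ β lam m D R G W K P B → (∀ t, P t = D / (R - 1)) →
      G = 1 ∧ β * (R + lam * premium μ m R) = 1 ∧ 1 < R ∧ R < 1 / β ∧
        ∀ t, B t = 0) ∧
    (∀ (R G : ℝ) (W K P B : ℕ → ℝ) (R' G' : ℝ) (W' K' P' B' : ℕ → ℝ),
      TSE μ β lam m D R G W K P B → (∀ t, P t = D / (R - 1)) →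
      TSE μ β lam m D R' G' W' K' P' B' → (∀ t, P' t = D / (R' - 1)) →
      R = R' ∧ G = G' ∧ W = W' ∧ P = P' ∧ B = B' ∧ ∀ t, K (t + 1) = K' (t + 1)) := by
  have := hμ.prob
  have hlam0 : 0 < lam := by linarith
  have hA3' := one_sub_mul_measureReal_Ioi_lt_premium hm hμ.finite_mean hA3
  refine ⟨⟨?_, fun hlt => ?_⟩,
    fun _ _ _ _ _ _ h hfund => h.fundamental_properties hμ hm hβ.1 hlam0 hfund,
    fun _ _ _ _ _ _ _ _ _ _ _ _ h hfund h' hfund' =>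
      h.eq_of_fundamental hμ hm hβ.1 hlam0 hfund h' hfund'⟩
  · rintro ⟨R, G, W, K, P, B, h, hfund⟩
    obtain ⟨-, hroot, hR, -⟩ := h.fundamental_properties hμ hm hβ.1 hlam0 hfund
    exact lt_lamBar_of_growth_eq_one hμ hm hβ.1 hlam0 hA3' hR hroot
  · obtain ⟨R, hR, hroot, hthr⟩ := exists_growth_eq_one_of_lt_lamBar hμ hm hβ hlam0 hA3' hlt
    exact ⟨R, 1, _, _, _, _, tse_of_growth_eq_one hm hμ.finite_mean hβ.1 hlam0 hD hR hroot hthr,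
      fun _ => rfl⟩
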